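/- arXiv:1011.6000 — 8 statements merged into one kernel-verified Lean document; each statement's English description precedes it below -/
import Mathlib

section
/- If (G, ·) is a group, θ an automorphism of G, and b ∈ G with θ(b) = b and θ^(n-1)(x) = b·x·b⁻¹ for all x ∈ G, then the n-ary operation f(x₁,...,xₙ) = x₁·θ(x₂)·θ²(x₃)···θ^(n-1)(xₙ)·b is associative, i.e., for all 1 ≤ i < j ≤ n, f(x₁,...,x_{i-1}, f(x_i,...,x_{i+n-1}), x_{i+n},...,x_{2n-1}) = f(x₁,...,x_{j-1}, f(x_j,...,x_{j+n-1}), x_{j+n},...,x_{2n-1}). -/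
/-! Write `∏_{k<l} θ^k(g k)` for the twisted product of a sequence `g`. Both sides of the
associativity law are twisted products of `x₀, …, x_{2n-2}` followed by `b · b`: the `b`
produced by the inner application of `f` is pushed to the right through the remaining
factors, and since `b · y = θ^(n-1)(y) · b` this raises each of their exponents by exactly
the `n - 1` by which their positions shifted. -/

/-- The `(θ,b)`-derived `n`-ary operation on a group `G`:
`f(x₁,…,xₙ) = x₁·θ(x₂)·θ²(x₃)···θ^(n-1)(xₙ)·b`. -/
def derOp {G : Type*} [Group G] (n : ℕ) (θ : MulAut G) (b : G) (x : Fin n → G) : G :=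
  (List.ofFn fun i : Fin n => (θ ^ (i : ℕ)) (x i)).prod * b

namespace MulAut

variable {G : Type*} [Group G] (θ : MulAut G)

def twistedProd (g : ℕ → G) : ℕ → G
  | 0 => 1
  | l + 1 => twistedProd g l * (θ ^ l) (g l)

theorem twistedProd_congr {g g' : ℕ → G} {l : ℕ} (h : ∀ k < l, g k = g' k) :
    twistedProd θ g l = twistedProd θ g' l := by
  induction l with
  | zero => rfl
  | succ l ih =>
    simp only [twistedProd, h l l.lt_succ_self, ih fun k hk => h k (by omega)]

theorem twistedProd_add (g : ℕ → G) (l m : ℕ) :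
    twistedProd θ g (l + m) =
      twistedProd θ g l * (θ ^ l) (twistedProd θ (fun k => g (l + k)) m) := by
  induction m with
  | zero => simp [twistedProd]
  | succ m ih =>
    rw [← add_assoc, twistedProd, ih, twistedProd, map_mul, pow_add, mul_apply, mul_assoc]

theorem pow_apply_eq_self_of_apply_eq_self {b : G} (hb : θ b = b) (k : ℕ) : (θ ^ k) b = b := by
  induction k with
  | zero => rfl
  | succ k ih => rw [pow_succ, mul_apply, hb, ih]

theorem prod_ofFn_pow_apply_eq_twistedProd (n : ℕ) (g : ℕ → G) :
    (List.ofFn fun k : Fin n => (θ ^ (k : ℕ)) (g k)).prod = twistedProd θ g n := by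
  induction n with
  | zero => rfl
  | succ n ih =>
    simp only [List.ofFn_succ', List.prod_concat, Fin.val_castSucc, Fin.val_last, ih]
    rfl

end MulAut

open MulAut

section

variable {G : Type*} [Group G]

theorem derOp_eq_twistedProd (n : ℕ) (θ : MulAut G) (b : G) (g : ℕ → G) :
    derOp n θ b (fun k => g k) = twistedProd θ g n * b := by
  rw [derOp, prod_ofFn_pow_apply_eq_twistedProd]

theorem derOp_nested_eq_twistedProd {n : ℕ} {θ : MulAut G} {b : G} (hb : θ b = b)
    (hconj : ∀ x : G, (θ ^ (n - 1)) x = b * x * b⁻¹) (x : ℕ → G) {i : ℕ} (hi : i < n) :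
    derOp n θ b (fun k : Fin n =>
        if (k : ℕ) < i then x k
        else if (k : ℕ) = i then derOp n θ b (fun m : Fin n => x (i + (m : ℕ)))
        else x ((k : ℕ) + n - 1)) =
      twistedProd θ x (n + n - 1) * b * b := by
  set g : ℕ → G := fun k => if k < i then x k
    else if k = i then derOp n θ b (fun m : Fin n => x (i + (m : ℕ)))
    else x (k + n - 1)
  obtain ⟨r, hr⟩ : ∃ r, n = i + 1 + r := ⟨n - 1 - i, by omega⟩
  have split_g := twistedProd_add θ g (i + 1) r
  have split_x := twistedProd_add θ x (i + n) r
  rw [← hr] at split_g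
  rw [show i + n + r = n + n - 1 by omega, twistedProd_add] at split_x
  have head : twistedProd θ g i = twistedProd θ x i :=
    twistedProd_congr θ fun k hk => if_pos hk
  have mid : g i = twistedProd θ (fun m => x (i + m)) n * b := by
    simp only [g, lt_irrefl, if_false, if_true]
    exact derOp_eq_twistedProd n θ b (fun m => x (i + m))
  have tail : twistedProd θ (fun k => g (i + 1 + k)) r =
      twistedProd θ (fun k => x (i + n + k)) r :=
    twistedProd_congr θ fun k _ => by
      simp only [g, if_neg (show ¬ i + 1 + k < i by omega), if_neg (show i + 1 + k ≠ i by omega)]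
      congr 1; omega
  have b_mul : ∀ y, b * (θ ^ (i + 1)) y = (θ ^ (i + n)) y * b := fun y => by
    rw [show i + n = n - 1 + (i + 1) by omega, pow_add θ (n - 1), mul_apply, hconj]; group
  calc derOp n θ b (fun k => g k)
      = twistedProd θ g i * (θ ^ i) (g i) *
          (θ ^ (i + 1)) (twistedProd θ (fun k => g (i + 1 + k)) r) * b := by
        rw [derOp_eq_twistedProd, split_g]; rfl
    _ = twistedProd θ x i * (θ ^ i) (twistedProd θ (fun m => x (i + m)) n) *
          (b * (θ ^ (i + 1)) (twistedProd θ (fun k => x (i + n + k)) r)) * b := by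
        rw [head, mid, tail, map_mul, pow_apply_eq_self_of_apply_eq_self θ hb]; group
    _ = twistedProd θ x (n + n - 1) * b * b := by
        rw [b_mul, split_x]; group

end

theorem derived_op_associative {G : Type*} [Group G] (n : ℕ) (hn : 2 ≤ n)
    (θ : MulAut G) (b : G) (hb : θ b = b)
    (hconj : ∀ x : G, (θ ^ (n - 1)) x = b * x * b⁻¹) :
    ∀ (x : ℕ → G) (i j : ℕ), i ≤ n - 1 → j ≤ n - 1 →
      derOp n θ b (fun k : Fin n =>
        if (k : ℕ) < i then x k
        else if (k : ℕ) = i then derOp n θ b (fun m : Fin n => x (i + (m : ℕ)))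
        else x ((k : ℕ) + n - 1)) =
      derOp n θ b (fun k : Fin n =>
        if (k : ℕ) < j then x k
        else if (k : ℕ) = j then derOp n θ b (fun m : Fin n => x (j + (m : ℕ)))
        else x ((k : ℕ) + n - 1)) := by
  intro x i j hi hj
  rw [derOp_nested_eq_twistedProd hb hconj x (by omega),
    derOp_nested_eq_twistedProd hb hconj x (by omega)]
end

section
/- Let (G,f) be an n-ary group and a ∈ G. Then the binary operation x * y := f(x, a, ..., a, y) (with n-2 copies of a) makes G a group whose identity element is the skew element ā, and the inverse of x in this group is f(ā, x, ..., x, x̄, ā) (with n-3 copies of x). -/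
/-- An `n`-ary operation is associative if all placements of one inner
application inside an outer application on `2n-1` arguments agree. -/
def NAryAssoc {G : Type*} (n : ℕ) (f : (Fin n → G) → G) : Prop :=
  ∀ (x : ℕ → G) (i j : ℕ), i ≤ n - 1 → j ≤ n - 1 →
    f (fun k : Fin n =>
      if (k : ℕ) < i then x k
      else if (k : ℕ) = i then f (fun m : Fin n => x (i + (m : ℕ)))
      else x ((k : ℕ) + n - 1)) =
    f (fun k : Fin n =>
      if (k : ℕ) < j then x k
      else if (k : ℕ) = j then f (fun m : Fin n => x (j + (m : ℕ)))
      else x ((k : ℕ) + n - 1))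

/-- Quasigroup property: fixing all but one argument gives unique solvability. -/
def NAryQuasigroup {G : Type*} (n : ℕ) (f : (Fin n → G) → G) : Prop :=
  ∀ (i : Fin n) (x : Fin n → G) (x₀ : G), ∃! y : G, f (Function.update x i y) = x₀

/-- The retract operation `x * y = f(x, a, …, a, y)` with `n-2` copies of `a`. -/
def retractOp {G : Type*} (n : ℕ) (f : (Fin n → G) → G) (a : G) (x y : G) : G :=
  f (fun k : Fin n => if (k : ℕ) = 0 then x else if (k : ℕ) = n - 1 then y else a)

/-- The inverse in the retract: `f(ā, x, …, x, x̄, ā)` with `n-3` copies of `x`. -/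
def retractInv {G : Type*} (n : ℕ) (f : (Fin n → G) → G) (sk : G → G) (a x : G) : G :=
  f (fun k : Fin n =>
    if (k : ℕ) = 0 then sk a
    else if (k : ℕ) = n - 1 then sk a
    else if (k : ℕ) = n - 2 then sk x
    else x)

/-! Each identity below comes from a word of length `2n - 1`: contracting an `n`-block of it at
two positions gives equal values (`NAryAssoc`); simplifying with identities already known and
cancelling a common context (`NAryQuasigroup`) leaves the identity. This yields Dörnte's
identities `f(x̄, x, …, x, y) = y`, `f(y, x, …, x, x̄) = y` and `f(x, …, x, x̄, y) = y`, hence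
that `ā` is a right identity and `f(ā, x, …, x, x̄, ā)` a right inverse of `x` for
`x * y = f(x, a, …, a, y)`. Associativity of `*` is one more contraction, and a semigroup with a
right identity and right inverses is a group. -/

section

variable {G : Type*} {n : ℕ} {f : (Fin n → G) → G}

theorem NAryQuasigroup.eq_of_apply_eq (h : NAryQuasigroup n f) {u v : Fin n → G} (i : Fin n)
    (huv : ∀ k, k ≠ i → u k = v k) (H : f u = f v) : u i = v i := by
  have hv : Function.update u i (v i) = v := by
    funext k
    rcases eq_or_ne k i with rfl | hk
    · simp
    · simp [hk, huv k hk]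
  obtain ⟨y, -, hy⟩ := h i u (f u)
  exact (hy _ (by simp)).trans (hy _ (by beta_reduce; rw [hv, H])).symm

theorem NAryAssoc.apply_eq_apply (h : NAryAssoc n f) (X : ℕ → G) (i j : ℕ)
    (hi : i ≤ n - 1) (hj : j ≤ n - 1) {u v : Fin n → G}
    (hu : ∀ k : Fin n, u k = if (k : ℕ) < i then X k
      else if (k : ℕ) = i then f (fun m : Fin n => X (i + m)) else X (k + n - 1))
    (hv : ∀ k : Fin n, v k = if (k : ℕ) < j then X k
      else if (k : ℕ) = j then f (fun m : Fin n => X (j + m)) else X (k + n - 1)) :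
    f u = f v := by
  rw [funext hu, funext hv]
  exact h X i j hi hj

variable {sk : G → G}

namespace NAryGroup

theorem apply_skew_first (hn : 2 ≤ n) (hassoc : NAryAssoc n f) (hquasi : NAryQuasigroup n f)
    (hsk : ∀ x : G, f (fun k : Fin n => if (k : ℕ) = n - 1 then sk x else x) = x) (x y : G) :
    f (fun k : Fin n => if (k : ℕ) = 0 then sk x else if (k : ℕ) = n - 1 then y else x) = y := by
  have H : f (fun k : Fin n => if (k : ℕ) = 0 then
          f (fun m : Fin n => if (m : ℕ) = n - 1 then sk x else x)
        else if (k : ℕ) = n - 1 then y else x)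
      = f (fun k : Fin n => if (k : ℕ) = n - 1 then
          f (fun m : Fin n => if (m : ℕ) = 0 then sk x else if (m : ℕ) = n - 1 then y else x)
        else x) := by
    refine hassoc.apply_eq_apply
      (fun t => if t = n - 1 then sk x else if t = 2 * n - 2 then y else x)
      0 (n - 1) (by omega) (by omega) ?_ ?_ <;> intro k <;>
    split_ifs <;> first | rfl | omega | (congr 1; funext m; split_ifs <;> first | rfl | omega)
  rw [hsk] at H
  have := hquasi.eq_of_apply_eq ⟨n - 1, by omega⟩ (fun k hk => ?_) H
  · simpa [show n - 1 ≠ 0 by omega] using this.symm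
  · simp only [ne_eq, Fin.ext_iff] at hk
    split_ifs <;> rfl

theorem apply_skew_last (hn : 2 ≤ n) (hassoc : NAryAssoc n f) (hquasi : NAryQuasigroup n f)
    (hsk : ∀ x : G, f (fun k : Fin n => if (k : ℕ) = n - 1 then sk x else x) = x) (x y : G) :
    f (fun k : Fin n => if (k : ℕ) = 0 then y else if (k : ℕ) = n - 1 then sk x else x) = y := by
  have H : f (fun k : Fin n => if (k : ℕ) = 0 then
          f (fun m : Fin n => if (m : ℕ) = 0 then y else if (m : ℕ) = n - 1 then sk x else x)
        else x)
      = f (fun k : Fin n => if (k : ℕ) = 0 then y else if (k : ℕ) = n - 1 then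
          f (fun m : Fin n => if (m : ℕ) = 0 then sk x else if (m : ℕ) = n - 1 then x else x)
        else x) := by
    refine hassoc.apply_eq_apply
      (fun t => if t = 0 then y else if t < n - 1 then x else if t = n - 1 then sk x else x)
      0 (n - 1) (by omega) (by omega) ?_ ?_ <;> intro k <;>
    split_ifs <;> first | rfl | omega | (congr 1; funext m; split_ifs <;> first | rfl | omega)
  rw [apply_skew_first hn hassoc hquasi hsk x x] at H
  have := hquasi.eq_of_apply_eq ⟨0, by omega⟩ (fun k hk => ?_) H
  · simpa using this
  · simp only [ne_eq, Fin.ext_iff] at hk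
    split_ifs <;> rfl

theorem apply_skew_penultimate (hn : 2 ≤ n) (hassoc : NAryAssoc n f)
    (hquasi : NAryQuasigroup n f)
    (hsk : ∀ x : G, f (fun k : Fin n => if (k : ℕ) = n - 1 then sk x else x) = x) (x y : G) :
    f (fun k : Fin n => if (k : ℕ) = n - 2 then sk x
      else if (k : ℕ) = n - 1 then y else x) = y := by
  have H : f (fun k : Fin n => if (k : ℕ) = n - 2 then
          f (fun m : Fin n => if (m : ℕ) = n - 1 then sk x else x)
        else if (k : ℕ) = n - 1 then y else x)
      = f (fun k : Fin n => if (k : ℕ) = n - 1 then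
          f (fun m : Fin n => if (m : ℕ) = n - 2 then sk x else if (m : ℕ) = n - 1 then y else x)
        else x) := by
    refine hassoc.apply_eq_apply
      (fun t => if t = 2 * n - 3 then sk x else if t = 2 * n - 2 then y else x)
      (n - 2) (n - 1) (by omega) (by omega) ?_ ?_ <;> intro k <;>
    split_ifs <;> first | rfl | omega | (congr 1; funext m; split_ifs <;> first | rfl | omega)
  rw [hsk] at H
  have := hquasi.eq_of_apply_eq ⟨n - 1, by omega⟩ (fun k hk => ?_) H
  · simpa [show n - 1 ≠ n - 2 by omega] using this.symm
  · simp only [ne_eq, Fin.ext_iff] at hk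
    split_ifs <;> rfl

end NAryGroup

theorem retractOp_assoc (hn : 2 ≤ n) (hassoc : NAryAssoc n f) (a x y z : G) :
    retractOp n f a (retractOp n f a x y) z = retractOp n f a x (retractOp n f a y z) := by
  simp only [retractOp]
  refine hassoc.apply_eq_apply (fun t => if t = 0 then x else if t < n - 1 then a
      else if t = n - 1 then y else if t < 2 * n - 2 then a else z)
    0 (n - 1) (by omega) (by omega) ?_ ?_ <;> intro k <;>
  split_ifs <;> first | rfl | omega | (congr 1; funext m; split_ifs <;> first | rfl | omega)

theorem retractOp_retractInv (hn : 3 ≤ n) (hassoc : NAryAssoc n f)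
    (hquasi : NAryQuasigroup n f)
    (hsk : ∀ x : G, f (fun k : Fin n => if (k : ℕ) = n - 1 then sk x else x) = x) (a x : G) :
    retractOp n f a x (retractInv n f sk a x) = sk a := by
  calc
    retractOp n f a x (retractInv n f sk a x)
      = f (fun k : Fin n => if (k : ℕ) = 0 then
          f (fun m : Fin n => if (m : ℕ) = 0 then x else if (m : ℕ) = n - 1 then sk a else a)
        else if (k : ℕ) = n - 2 then sk x else if (k : ℕ) = n - 1 then sk a else x) := by
      simp only [retractOp, retractInv]
      refine (hassoc.apply_eq_apply (fun t => if t = 0 then x else if t < n - 1 then a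
          else if t = n - 1 then sk a else if t = 2 * n - 3 then sk x
          else if t = 2 * n - 2 then sk a else x)
        0 (n - 1) (by omega) (by omega) ?_ ?_).symm <;> intro k <;>
      split_ifs <;> first | rfl | omega | (congr 1; funext m; split_ifs <;> first | rfl | omega)
    _ = f (fun k : Fin n => if (k : ℕ) = n - 2 then sk x
          else if (k : ℕ) = n - 1 then sk a else x) := by
      rw [NAryGroup.apply_skew_last (by omega) hassoc hquasi hsk]
      congr 1; funext k; split_ifs <;> first | rfl | omega
    _ = sk a := NAryGroup.apply_skew_penultimate (by omega) hassoc hquasi hsk x (sk a)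

end

theorem retract_is_group {G : Type*} (n : ℕ) (hn : 3 ≤ n)
    (f : (Fin n → G) → G) (hassoc : NAryAssoc n f) (hquasi : NAryQuasigroup n f)
    (sk : G → G)
    (hsk : ∀ x : G, f (fun k : Fin n => if (k : ℕ) = n - 1 then sk x else x) = x)
    (a : G) :
    (∀ x y z : G, retractOp n f a (retractOp n f a x y) z
        = retractOp n f a x (retractOp n f a y z)) ∧
    (∀ x : G, retractOp n f a x (sk a) = x) ∧
    (∀ x : G, retractOp n f a (sk a) x = x) ∧
    (∀ x : G, retractOp n f a x (retractInv n f sk a x) = sk a) ∧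
    (∀ x : G, retractOp n f a (retractInv n f sk a x) x = sk a) := by
  have assoc := retractOp_assoc (by omega) hassoc a
  have mul_skew : ∀ x, retractOp n f a x (sk a) = x :=
    NAryGroup.apply_skew_last (by omega) hassoc hquasi hsk a
  have mul_inv := retractOp_retractInv hn hassoc hquasi hsk a
  let : Mul G := ⟨retractOp n f a⟩
  let : One G := ⟨sk a⟩
  let : Inv G := ⟨retractInv n f sk a⟩
  let : Group G := Group.ofRightAxioms assoc mul_skew mul_inv
  exact ⟨assoc, mul_skew, one_mul, mul_inv, inv_mul_cancel⟩
end

section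
/- Let (G,f) = der_θ(G,·) where θ ∈ Aut(G,·) and θ^(n-1) = id. If a ∈ G satisfies ā = a (i.e., a·θ(a)·θ²(a)···θ^(n-1)(a) = a) and φ ∈ Aut(G,·) satisfies θφθ⁻¹φ⁻¹ = I_a (where I_a(x) = a⁻¹xa), then ψ(x) = φ(x)·a is an automorphism of the n-ary group (G,f), i.e., ψ(f(x₁,...,xₙ)) = f(ψ(x₁),...,ψ(xₙ)) for all x₁,...,xₙ and ψ is a bijection. -/
/-!
Write `c k = twistedPow θ a k = a · θ(a) ⋯ θ^(k-1)(a)`, so that `ā = a` says `c n = a`.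
The hypothesis on `φ` says `θ ∘ φ = I_a ∘ φ ∘ θ`, which iterates to
`θ^k ∘ φ = I_(c k) ∘ φ ∘ θ^k`. Hence the `k`-th factor of `f(φ x₁ · a, …, φ xₙ · a)` is
`(c k)⁻¹ · φ(θ^k xₖ) · c (k+1)`, and the product telescopes to
`φ(f(x₁, …, xₙ)) · c n = ψ(f(x₁, …, xₙ))`.
-/

section TwistedPow

variable {G : Type*} [Group G]

theorem List.prod_ofFn_inv_mul_mul_telescope (c : ℕ → G) :
    ∀ {m : ℕ} (y : Fin m → G),
      (List.ofFn fun i : Fin m => (c i)⁻¹ * y i * c (i + 1)).prod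
        = (c 0)⁻¹ * (List.ofFn y).prod * c m
  | 0, _ => by simp
  | m + 1, y => by
    rw [List.ofFn_succ', List.prod_concat, List.ofFn_succ', List.prod_concat]
    simp only [Fin.val_castSucc, Fin.val_last]
    rw [List.prod_ofFn_inv_mul_mul_telescope c (fun i => y i.castSucc)]
    group

def twistedPow (θ : MulAut G) (a : G) (k : ℕ) : G :=
  (List.ofFn fun i : Fin k => (θ ^ (i : ℕ)) a).prod

variable (θ : MulAut G) (a : G)

@[simp]
theorem twistedPow_zero : twistedPow θ a 0 = 1 := rfl

theorem twistedPow_succ (k : ℕ) : twistedPow θ a (k + 1) = twistedPow θ a k * (θ ^ k) a := by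
  rw [twistedPow, List.ofFn_succ', List.prod_concat]
  rfl

variable {θ a} {φ : G → G}

theorem pow_apply_eq_conj_twistedPow (h : ∀ y, θ (φ y) = a⁻¹ * φ (θ y) * a) (k : ℕ) (y : G) :
    (θ ^ k) (φ y) = (twistedPow θ a k)⁻¹ * φ ((θ ^ k) y) * twistedPow θ a k := by
  induction k generalizing y with
  | zero => simp
  | succ k ih =>
    rw [pow_succ, MulAut.mul_apply, MulAut.mul_apply, h, map_mul, map_mul, map_inv, ih,
      twistedPow_succ]
    group

theorem prod_ofFn_pow_apply_mul_right (h : ∀ y, θ (φ y) = a⁻¹ * φ (θ y) * a) {m : ℕ}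
    (x : Fin m → G) :
    (List.ofFn fun i : Fin m => (θ ^ (i : ℕ)) (φ (x i) * a)).prod
      = (List.ofFn fun i : Fin m => φ ((θ ^ (i : ℕ)) (x i))).prod * twistedPow θ a m := by
  have factor (i : ℕ) (y : G) : (θ ^ i) (φ y * a)
      = (twistedPow θ a i)⁻¹ * φ ((θ ^ i) y) * twistedPow θ a (i + 1) := by
    rw [map_mul, pow_apply_eq_conj_twistedPow h, twistedPow_succ, mul_assoc _ _ ((θ ^ i) a)]
  simp only [factor]
  rw [List.prod_ofFn_inv_mul_mul_telescope (twistedPow θ a), twistedPow_zero, inv_one, one_mul]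

end TwistedPow

theorem Ra_phi_is_automorphism_general {G : Type*} [Group G] (n : ℕ)
    (θ : MulAut G) (a : G)
    (ha : derOp n θ 1 (fun _ : Fin n => a) = a)
    (φ : MulAut G)
    (hcomm : ∀ x : G, θ (φ (θ⁻¹ (φ⁻¹ x))) = a⁻¹ * x * a) :
    Function.Bijective (fun x : G => φ x * a) ∧
    ∀ x : Fin n → G,
      φ (derOp n θ 1 x) * a = derOp n θ 1 (fun i => φ (x i) * a) := by
  have hθφ (y : G) : θ (φ y) = a⁻¹ * φ (θ y) * a := by
    simpa using hcomm (φ (θ y))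
  have hcn : twistedPow θ a n = a := by
    simpa [derOp, twistedPow] using ha
  refine ⟨(Equiv.mulRight a).bijective.comp φ.bijective, fun x => ?_⟩
  rw [derOp, derOp, mul_one, mul_one, prod_ofFn_pow_apply_mul_right hθφ, hcn, map_list_prod,
    List.map_ofFn]
  rfl

theorem Ra_phi_is_automorphism {G : Type*} [Group G] (n : ℕ) (hn : 2 ≤ n)
    (θ : MulAut G) (hθ : θ ^ (n - 1) = 1) (a : G)
    (ha : derOp n θ 1 (fun _ : Fin n => a) = a)
    (φ : MulAut G)
    (hcomm : ∀ x : G, θ (φ (θ⁻¹ (φ⁻¹ x))) = a⁻¹ * x * a) :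
    Function.Bijective (fun x : G => φ x * a) ∧
    ∀ x : Fin n → G,
      φ (derOp n θ 1 x) * a = derOp n θ 1 (fun i => φ (x i) * a) :=
  Ra_phi_is_automorphism_general n θ a ha φ hcomm
end

section
/- Let (G,f) = der_θ(G,·) with θ^(n-1) = id. Every automorphism ψ of the n-ary group (G,f) has the form ψ(x) = φ(x)·a where φ ∈ Aut(G,·), a satisfies a·θ(a)···θ^(n-1)(a) = a, and [θ,φ] = I_a (with I_a(x) = a⁻¹xa). -/
section

variable {G : Type*} [Group G]

theorem derOp_const_one (n : ℕ) (θ : MulAut G) : derOp n θ 1 (fun _ => 1) = 1 := by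
  simp [derOp]

theorem derOp_cons_cons (m : ℕ) (θ : MulAut G) (u v : G) (w : Fin m → G) :
    derOp (m + 2) θ 1 (Fin.cons u (Fin.cons v w)) = u * θ v * (θ ^ 2) (derOp m θ 1 w) := by
  simp only [derOp, List.ofFn_succ, mul_one, map_list_prod, List.map_ofFn, List.prod_cons,
    mul_assoc]
  congr
  ext i
  simp only [Fin.val_succ, Fin.cons_succ, Function.comp_apply, ← MulAut.mul_apply, ← pow_add]
  ring_nf

theorem derOp_cons_cons_one (m : ℕ) (θ : MulAut G) (x y : G) :
    derOp (m + 2) θ 1 (Fin.cons x (Fin.cons (θ⁻¹ y) 1)) = x * y := by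
  rw [derOp_cons_cons, show (1 : Fin m → G) = fun _ => 1 from rfl, derOp_const_one]
  simp

theorem map_mul_of_map_derOp {m : ℕ} {θ : MulAut G} {ψ : G → G}
    (hψ : ∀ x : Fin (m + 2) → G, ψ (derOp (m + 2) θ 1 x) = derOp (m + 2) θ 1 (fun i => ψ (x i)))
    (x y : G) :
    ψ (x * y) = ψ x * θ (ψ (θ⁻¹ y)) * (θ ^ 2) (derOp m θ 1 fun _ => ψ 1) := by
  have h := hψ (Fin.cons x (Fin.cons (θ⁻¹ y) 1))
  rwa [derOp_cons_cons_one, ← Function.comp_def, Fin.comp_cons, Fin.comp_cons,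
    derOp_cons_cons] at h

theorem map_mul_eq_mul_inv_mul {ψ χ : G → G} (h : ∀ x y, ψ (x * y) = ψ x * χ y) (x y : G) :
    ψ (x * y) = ψ x * (ψ 1)⁻¹ * ψ y := by
  have hχ : χ y = (ψ 1)⁻¹ * ψ y := by rw [← one_mul y, h 1 y, one_mul]; group
  rw [h, hχ, mul_assoc]

noncomputable def mulAutOfMapMul (ψ : G → G) (hψ : Function.Bijective ψ)
    (h : ∀ x y, ψ (x * y) = ψ x * (ψ 1)⁻¹ * ψ y) : MulAut G where
  toEquiv := Equiv.ofBijective (fun x => ψ x * (ψ 1)⁻¹)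
    ((Equiv.mulRight (ψ 1)⁻¹).bijective.comp hψ :)
  map_mul' x y := by
    change ψ (x * y) * _ = ψ x * _ * (ψ y * _)
    rw [h]
    group

theorem mulAutOfMapMul_apply (ψ : G → G) (hψ : Function.Bijective ψ)
    (h : ∀ x y, ψ (x * y) = ψ x * (ψ 1)⁻¹ * ψ y) (x : G) :
    mulAutOfMapMul ψ hψ h x = ψ x * (ψ 1)⁻¹ :=
  rfl

theorem map_mul_inv_conj_eq {θ : MulAut G} {ψ : G → G} {c : G}
    (h : ∀ x y, ψ (x * y) = ψ x * θ (ψ (θ⁻¹ y)) * c) (y : G) :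
    θ (ψ (θ⁻¹ y) * (ψ 1)⁻¹) = (ψ 1)⁻¹ * ψ y := by
  have hc : c = (θ (ψ 1))⁻¹ := by
    have h1 := h 1 1
    simp only [mul_one, map_one, mul_assoc, left_eq_mul] at h1
    exact eq_inv_of_mul_eq_one_right h1
  have hy := h 1 y
  rw [one_mul, hc] at hy
  rw [hy, map_mul, map_inv]
  group

end

theorem automorphism_structure_general {G : Type*} [Group G] (n : ℕ) (hn : 2 ≤ n)
    (θ : MulAut G)
    (ψ : G → G) (hbij : Function.Bijective ψ)
    (hhom : ∀ x : Fin n → G, ψ (derOp n θ 1 x) = derOp n θ 1 (fun i => ψ (x i))) :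
    ∃ (φ : MulAut G) (a : G),
      (∀ x : G, ψ x = φ x * a) ∧
      derOp n θ 1 (fun _ : Fin n => a) = a ∧
      ∀ x : G, θ (φ (θ⁻¹ (φ⁻¹ x))) = a⁻¹ * x * a := by
  obtain ⟨m, rfl⟩ : ∃ m, n = m + 2 := ⟨n - 2, by omega⟩
  have hkey := map_mul_of_map_derOp hhom
  have hheap := map_mul_eq_mul_inv_mul fun x y => (hkey x y).trans (mul_assoc _ _ _)
  set φ := mulAutOfMapMul ψ hbij hheap
  have hconj (y : G) : θ (φ (θ⁻¹ y)) = (ψ 1)⁻¹ * φ y * ψ 1 := by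
    rw [mulAutOfMapMul_apply, mulAutOfMapMul_apply, map_mul_inv_conj_eq hkey]
    group
  refine ⟨φ, ψ 1, fun x => by simp [φ, mulAutOfMapMul_apply], ?_, fun x => ?_⟩
  · simpa [derOp_const_one] using (hhom fun _ => 1).symm
  · simpa using hconj (φ⁻¹ x)

theorem automorphism_structure {G : Type*} [Group G] (n : ℕ) (hn : 2 ≤ n)
    (θ : MulAut G) (hθ : θ ^ (n - 1) = 1)
    (ψ : G → G) (hbij : Function.Bijective ψ)
    (hhom : ∀ x : Fin n → G, ψ (derOp n θ 1 x) = derOp n θ 1 (fun i => ψ (x i))) :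
    ∃ (φ : MulAut G) (a : G),
      (∀ x : G, ψ x = φ x * a) ∧
      derOp n θ 1 (fun _ : Fin n => a) = a ∧
      ∀ x : G, θ (φ (θ⁻¹ (φ⁻¹ x))) = a⁻¹ * x * a :=
  automorphism_structure_general n hn θ ψ hbij hhom
end

section
/- Let (G,f) = der_{θ,b}(G,·) and suppose u ∈ G is a central idempotent (u is in the center of (G,·) and f(u,...,u) = u). Then the right translation R_u : x ↦ x·u is an isomorphism from the n-ary group der_θ(G,·) (operation g(x₁,...,xₙ) = x₁·θ(x₂)···θ^(n-1)(xₙ)) to (G,f): R_u(g(x₁,...,xₙ)) = f(R_u(x₁),...,R_u(xₙ)). -/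
theorem List.prod_map_mul_of_commute {ι M : Type*} [Monoid M] {f g : ι → M} :
    ∀ {l : List ι}, (∀ i ∈ l, ∀ j ∈ l, Commute (g i) (f j)) →
      (l.map fun i => f i * g i).prod = (l.map f).prod * (l.map g).prod
  | [], _ => by simp
  | i :: l, h => by
    have ih := List.prod_map_mul_of_commute fun j hj k hk =>
      h j (List.mem_cons_of_mem i hj) k (List.mem_cons_of_mem i hk)
    have hcomm : Commute (g i) (l.map f).prod :=
      Commute.list_prod_right _ _ fun y hy => by
        obtain ⟨k, hk, rfl⟩ := List.mem_map.mp hy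
        exact h i List.mem_cons_self k (List.mem_cons_of_mem i hk)
    simp only [List.map_cons, List.prod_cons, ih]
    rw [mul_assoc, ← mul_assoc (g i), hcomm.eq, mul_assoc, mul_assoc]

theorem derOp_mul_right_of_mem_center {G : Type*} [Group G] (n : ℕ) (θ : MulAut G) (b : G)
    {u : G} (hu : u ∈ Subgroup.center G) (x : Fin n → G) :
    derOp n θ b (fun i => x i * u) = derOp n θ 1 x * derOp n θ b (fun _ => u) := by
  have hcentral (i : Fin n) : (θ ^ (i : ℕ)) u ∈ Set.center G :=
    MulEquivClass.apply_mem_center _ hu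
  simp only [derOp, map_mul, List.ofFn_eq_map, mul_one, ← mul_assoc]
  rw [List.prod_map_mul_of_commute fun i _ j _ => (hcentral i).comm _]

theorem right_translation_iso_general {G : Type*} [Group G] (n : ℕ)
    (θ : MulAut G) (b : G)
    (u : G) (hu : u ∈ Subgroup.center G)
    (hidem : derOp n θ b (fun _ : Fin n => u) = u) :
    Function.Bijective (fun x : G => x * u) ∧
    ∀ x : Fin n → G,
      derOp n θ 1 x * u = derOp n θ b (fun i => x i * u) :=
  ⟨Group.mulRight_bijective u, fun x => by
    rw [derOp_mul_right_of_mem_center n θ b hu, hidem]⟩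

/-- If `u` is a central idempotent of `(G,f) = der_{θ,b}(G,·)`, then the right
translation `R_u` is an isomorphism from `der_θ(G,·)` to `(G,f)`. -/
theorem right_translation_iso {G : Type*} [Group G] (n : ℕ) (hn : 2 ≤ n)
    (θ : MulAut G) (b : G) (hb : θ b = b)
    (hconj : ∀ x : G, (θ ^ (n - 1)) x = b * x * b⁻¹)
    (u : G) (hu : u ∈ Subgroup.center G)
    (hidem : derOp n θ b (fun _ : Fin n => u) = u) :
    Function.Bijective (fun x : G => x * u) ∧
    ∀ x : Fin n → G,
      derOp n θ 1 x * u = derOp n θ b (fun i => x i * u) :=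
  right_translation_iso_general n θ b u hu hidem
end

section
/- Let (G,·) and (H,*) be groups and ψ : G → H a map satisfying ψ(x₁·x₂···xₙ) = ψ(x₁)*ψ(x₂)*···*ψ(xₙ) for all x₁,...,xₙ ∈ G. Then ψ decomposes uniquely as ψ(x) = φ(x)*a where φ : G → H is a group homomorphism, a = ψ(1) satisfies a^(n-1) = 1, and a commutes with every element of φ(G). Conversely any such pair (φ, a) yields such a ψ. -/
/-!
Feeding `(x, y, 1, …, 1)` to an `n`-ary homomorphism `ψ` gives `ψ (x y) = ψ x ψ y a ^ (n - 2)`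
with `a = ψ 1`. Taking `x = y = 1` yields `a ^ (n - 1) = 1`, and taking `x = 1` or `y = 1` shows
that `a` commutes with `ψ(G)`; hence `g ↦ ψ g a⁻¹` is a homomorphism. Conversely, as `a` commutes
with `φ(G)`, the product of the `n` factors `φ xᵢ a` is `φ (∏ xᵢ) aⁿ = φ (∏ xᵢ) a`.
-/

/-- Homomorphisms `der^n(G, ·) → der^n(H, *)` in the paper's notation. -/
def IsNaryHom {G H : Type*} [Group G] [Group H] (n : ℕ) (ψ : G → H) : Prop :=
  ∀ x : Fin n → G, ψ (List.ofFn x).prod = (List.ofFn fun i => ψ (x i)).prod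

theorem List.prod_map_mul_right_of_commute {M : Type*} [Monoid M] {a : M} :
    ∀ {l : List M}, (∀ x ∈ l, Commute a x) → (l.map (· * a)).prod = l.prod * a ^ l.length
  | [], _ => by simp
  | x :: l, hl => by
    rw [List.forall_mem_cons] at hl
    rw [List.map_cons, List.prod_cons, List.prod_map_mul_right_of_commute hl.2, List.prod_cons,
      List.length_cons, pow_succ', mul_assoc x, ← mul_assoc a, (Commute.list_prod_right _ _ hl.2).eq]
    simp only [mul_assoc]

namespace IsNaryHom

variable {G H : Type*} [Group G] [Group H] {m : ℕ} {ψ : G → H}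

theorem map_mul (h : IsNaryHom (m + 2) ψ) (x y : G) : ψ (x * y) = ψ x * ψ y * ψ 1 ^ m := by
  simpa [List.ofFn_succ, List.prod_ofFn, mul_assoc] using h (Fin.cons x (Fin.cons y 1))

theorem map_one_pow_succ (h : IsNaryHom (m + 2) ψ) : ψ 1 ^ (m + 1) = 1 := by
  have h11 := h.map_mul 1 1
  rw [mul_one, mul_assoc, left_eq_mul, ← pow_succ'] at h11
  exact h11

theorem map_one_pow (h : IsNaryHom (m + 2) ψ) : ψ 1 ^ m = (ψ 1)⁻¹ :=
  eq_inv_of_mul_eq_one_left (by rw [← pow_succ, h.map_one_pow_succ])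

theorem commute_map_one (h : IsNaryHom (m + 2) ψ) (g : G) : Commute (ψ 1) (ψ g) := by
  have h1g := h.map_mul 1 g
  have hg1 := h.map_mul g 1
  rw [one_mul] at h1g
  rw [mul_one] at hg1
  exact mul_right_cancel (h1g.symm.trans hg1)

theorem map_mul_eq_mul_mul_inv (h : IsNaryHom (m + 2) ψ) (x y : G) :
    ψ (x * y) = ψ x * ψ y * (ψ 1)⁻¹ := by
  rw [h.map_mul, h.map_one_pow]

def toMonoidHom (h : IsNaryHom (m + 2) ψ) : G →* H where
  toFun g := ψ g * (ψ 1)⁻¹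
  map_one' := mul_inv_cancel _
  map_mul' x y := by
    show ψ (x * y) * (ψ 1)⁻¹ = ψ x * (ψ 1)⁻¹ * (ψ y * (ψ 1)⁻¹)
    rw [h.map_mul_eq_mul_mul_inv, mul_assoc (ψ x) (ψ 1)⁻¹, ← mul_assoc (ψ 1)⁻¹,
      (h.commute_map_one y).inv_left.eq]
    simp only [mul_assoc]

theorem toMonoidHom_apply (h : IsNaryHom (m + 2) ψ) (g : G) :
    h.toMonoidHom g = ψ g * (ψ 1)⁻¹ := rfl

theorem map_eq_toMonoidHom_mul (h : IsNaryHom (m + 2) ψ) (g : G) :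
    ψ g = h.toMonoidHom g * ψ 1 := by
  simp [toMonoidHom_apply]

theorem commute_toMonoidHom (h : IsNaryHom (m + 2) ψ) (g : G) :
    Commute (ψ 1) (h.toMonoidHom g) :=
  (h.commute_map_one g).mul_right (Commute.refl _).inv_right

theorem eq_toMonoidHom (h : IsNaryHom (m + 2) ψ) {φ : G →* H} (hφ : ∀ g, ψ g = φ g * ψ 1) :
    φ = h.toMonoidHom := by
  ext g
  simp [toMonoidHom_apply, hφ g]

end IsNaryHom

theorem MonoidHom.isNaryHom_mul_right {G H : Type*} [Group G] [Group H] {n : ℕ} (φ : G →* H)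
    {a : H} (hpow : a ^ n = a) (hc : ∀ g, Commute a (φ g)) : IsNaryHom n fun g => φ g * a := by
  intro x
  have hl : ∀ y ∈ (List.ofFn x).map φ, Commute a y := by simp [hc]
  have hmap : (List.ofFn fun i => φ (x i) * a) = ((List.ofFn x).map φ).map (· * a) := by
    rw [List.map_map, List.map_ofFn]
    rfl
  show φ (List.ofFn x).prod * a = _
  rw [hmap, List.prod_map_mul_right_of_commute hl, map_list_prod, List.length_map,
    List.length_ofFn, hpow]

theorem nary_hom_decomposition {G H : Type*} [Group G] [Group H]
    (n : ℕ) (hn : 2 ≤ n) :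
    (∀ ψ : G → H,
      (∀ x : Fin n → G, ψ ((List.ofFn x).prod) = (List.ofFn fun i => ψ (x i)).prod) →
      ∃! p : (G →* H) × H,
        (∀ g : G, ψ g = p.1 g * p.2) ∧
        p.2 = ψ 1 ∧ p.2 ^ (n - 1) = 1 ∧ ∀ g : G, Commute p.2 (p.1 g)) ∧
    (∀ (φ : G →* H) (a : H), a ^ (n - 1) = 1 → (∀ g : G, Commute a (φ g)) →
      ∀ x : Fin n → G,
        φ ((List.ofFn x).prod) * a = (List.ofFn fun i => φ (x i) * a).prod) := by
  obtain ⟨m, rfl⟩ : ∃ m, n = m + 2 := ⟨n - 2, by omega⟩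
  refine ⟨fun ψ (h : IsNaryHom (m + 2) ψ) => ?_, fun φ a hpow hc => ?_⟩
  · refine ⟨(h.toMonoidHom, ψ 1),
      ⟨h.map_eq_toMonoidHom_mul, rfl, h.map_one_pow_succ, h.commute_toMonoidHom⟩, ?_⟩
    rintro ⟨φ, a⟩ ⟨hφ, rfl, -, -⟩
    rw [h.eq_toMonoidHom (φ := φ) hφ]
  · have hpow' : a ^ (m + 2) = a := by rw [pow_succ, show a ^ (m + 1) = 1 from hpow, one_mul]
    exact φ.isNaryHom_mul_right hpow' hc
end

section
/- Let (G,·), (H,*) be groups and let α₁,...,α_{n+1} : G → H satisfy α_{n+1}(x₁·x₂···xₙ) = α₁(x₁)*α₂(x₂)*···*αₙ(xₙ) for all xᵢ ∈ G. Then there exist a₁,...,aₙ ∈ H, an element a ∈ H centralizing φ(G) with a^(n-1) = 1, and a group homomorphism φ : G → H, such that α_{n+1}(x) = φ(x)*a*(a₁*···*aₙ) and αᵢ(x) = (a₁*···*a_{i-1})⁻¹ * φ(x)*a * (a₁*···*aᵢ) for each 1 ≤ i ≤ n. -/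
/-- Partial product `a₁ * ⋯ * aⱼ` of a tuple `as : Fin n → H`. -/
def partProd {H : Type*} [Group H] {n : ℕ} (as : Fin n → H) (j : ℕ) : H :=
  (List.ofFn fun k : Fin j => if h : (k : ℕ) < n then as ⟨k, h⟩ else 1).prod

lemma ofFn_update {M : Type*} {n : ℕ} (f : Fin n → M) (j : Fin n) (b : M) :
    List.ofFn (Function.update f j b) = (List.ofFn f).set j b := by
  apply List.ext_getElem (by simp)
  intro i h1 h2
  simp only [List.getElem_ofFn, List.getElem_set]
  rw [Function.update_apply]
  by_cases h : (j : ℕ) = i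
  · simp [Fin.ext_iff, h]
  · simp [Fin.ext_iff, h, Ne.symm h]

lemma partProd_eq_take {H : Type*} [Group H] {n : ℕ} (as : Fin n → H) (j : ℕ) (hj : j ≤ n) :
    partProd as j = ((List.ofFn as).take j).prod := by
  unfold partProd
  congr 1
  apply List.ext_getElem (by simpa)
  intro i h1 h2
  simp only [List.length_ofFn] at h1
  simp only [List.getElem_ofFn, List.getElem_take]
  rw [dif_pos (lt_of_lt_of_le h1 hj)]

lemma partProd_top {H : Type*} [Group H] {n : ℕ} (as : Fin n → H) :
    partProd as n = (List.ofFn as).prod := by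
  rw [partProd_eq_take as n le_rfl, List.take_of_length_le (by simp)]

lemma prod_drop_eq {H : Type*} [Group H] {n : ℕ} (as : Fin n → H) (j : ℕ) (hj : j ≤ n) :
    ((List.ofFn as).drop j).prod = (partProd as j)⁻¹ * partProd as n := by
  rw [partProd_eq_take as j hj, partProd_top, eq_inv_mul_iff_mul_eq,
    List.prod_take_mul_prod_drop]

lemma prod_double_update {M : Type*} [Monoid M] {n : ℕ} (hn : 2 ≤ n) (f : Fin n → M) (b c : M) :
    (List.ofFn (Function.update (Function.update f ⟨0, by omega⟩ b) ⟨1, by omega⟩ c)).prod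
      = b * c * ((List.ofFn f).drop 2).prod := by
  rw [ofFn_update, List.prod_set]
  have htake : ((List.ofFn (Function.update f ⟨0, by omega⟩ b)).take 1)
      = [Function.update f ⟨0, by omega⟩ b ⟨0, by omega⟩] := by
    apply List.ext_getElem (by simp; omega)
    intro i h1 h2
    simp only [List.length_cons, List.length_nil] at h2
    interval_cases i
    simp
  have hdrop : ((List.ofFn (Function.update f ⟨0, by omega⟩ b)).drop 2)
      = (List.ofFn f).drop 2 := by
    apply List.ext_getElem (by simp)
    intro i h1 h2
    simp only [List.getElem_drop, List.getElem_ofFn]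
    rw [Function.update_apply, if_neg (by simp [Fin.ext_iff])]
  rw [htake, hdrop, if_pos (by simpa using by omega : 1 < (List.ofFn (Function.update f ⟨0, by omega⟩ b)).length)]
  simp

theorem homotopy_decomposition {G H : Type*} [Group G] [Group H]
    (n : ℕ) (hn : 2 ≤ n) (α : Fin (n + 1) → G → H)
    (hhomotopy : ∀ x : Fin n → G,
      α (Fin.last n) ((List.ofFn x).prod)
        = (List.ofFn fun i : Fin n => α i.castSucc (x i)).prod) :
    ∃ (as : Fin n → H) (a : H) (φ : G →* H),
      a ^ (n - 1) = 1 ∧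
      (∀ g : G, Commute a (φ g)) ∧
      (∀ g : G, α (Fin.last n) g = φ g * a * partProd as n) ∧
      ∀ (i : Fin n) (g : G),
        α i.castSucc g = (partProd as (i : ℕ))⁻¹ * (φ g * a) * partProd as ((i : ℕ) + 1) := by
  set as : Fin n → H := fun i => α i.castSucc 1 with has
  set P : ℕ → H := partProd as with hP
  set ψ : G → H := fun g => α (Fin.last n) g * (P n)⁻¹ with hψ
  -- α (last n) 1 = P n
  have h1 : α (Fin.last n) 1 = P n := by
    have h := hhomotopy (fun _ => 1)
    simp only [List.ofFn_const, List.prod_replicate, one_pow] at h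
    rw [h, hP, partProd_top]
  have hψ1 : ψ 1 = 1 := by simp [hψ, h1]
  -- key single-variable identity
  have key : ∀ (j : Fin n) (g : G),
      α j.castSucc g = (P (j : ℕ))⁻¹ * ψ g * P ((j : ℕ) + 1) := by
    intro j g
    have hx := hhomotopy (Function.update (fun _ => 1) j g)
    have hL : (List.ofFn (Function.update (fun _ : Fin n => (1:G)) j g)).prod = g := by
      rw [ofFn_update, List.prod_set]
      simp [j.isLt]
    have hR : (fun i : Fin n => α i.castSucc (Function.update (fun _ : Fin n => (1:G)) j g i))
        = Function.update as j (α j.castSucc g) := by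
      funext i
      by_cases h : i = j
      · subst h; simp
      · simp [Function.update_of_ne h, has]
    rw [hL, hR, ofFn_update, List.prod_set,
      if_pos (by simpa using j.isLt : (j:ℕ) < (List.ofFn as).length),
      ← partProd_eq_take as (j : ℕ) j.isLt.le,
      prod_drop_eq as ((j:ℕ)+1) (by omega)] at hx
    rw [hψ]
    simp only [← hP] at hx ⊢
    rw [hx]
    group
  -- ψ is multiplicative
  have hmul : ∀ g g' : G, ψ (g * g') = ψ g * ψ g' := by
    intro g g'
    have h0 : (0:ℕ) < n := by omega
    have h1' : (1:ℕ) < n := by omega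
    have hx := hhomotopy
      (Function.update (Function.update (fun _ => 1) ⟨0, h0⟩ g) ⟨1, h1'⟩ g')
    rw [prod_double_update hn] at hx
    have hR : (fun i : Fin n => α i.castSucc
        ((Function.update (Function.update (fun _ : Fin n => (1:G)) ⟨0, h0⟩ g) ⟨1, h1'⟩ g') i))
        = Function.update (Function.update as ⟨0, h0⟩ (α (Fin.castSucc ⟨0, h0⟩) g))
            ⟨1, h1'⟩ (α (Fin.castSucc ⟨1, h1'⟩) g') := by
      funext i
      by_cases hi1 : i = ⟨1, h1'⟩
      · subst hi1; simp
      · by_cases hi0 : i = ⟨0, h0⟩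
        · subst hi0
          rw [Function.update_of_ne hi1, Function.update_of_ne hi1]
          simp
        · rw [Function.update_of_ne hi1, Function.update_of_ne hi0,
            Function.update_of_ne hi1, Function.update_of_ne hi0]
    rw [hR, prod_double_update hn, prod_drop_eq as 2 (by omega)] at hx
    have hones : ((List.ofFn fun _ : Fin n => (1:G)).drop 2).prod = 1 := by
      simp
    rw [hones, mul_one] at hx
    rw [key ⟨0, h0⟩, key ⟨1, h1'⟩] at hx
    simp only [← hP] at hx
    have hPn : α (Fin.last n) (g * g') = ψ (g * g') * P n := by
      rw [hψ]; group
    have hP0 : P 0 = 1 := by simp [hP, partProd]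
    rw [hPn, hP0] at hx
    -- now solve for ψ (g*g')
    have : ψ (g * g') * P n = ψ g * ψ g' * P n := by
      rw [hx]; group
    exact mul_right_cancel this
  refine ⟨as, 1, { toFun := ψ, map_one' := hψ1, map_mul' := hmul }, one_pow _,
    fun g => Commute.one_left _, fun g => ?_, fun i g => ?_⟩
  · show α (Fin.last n) g = ψ g * 1 * P n
    rw [hψ]; group
  · show α i.castSucc g = (P (i:ℕ))⁻¹ * (ψ g * 1) * P ((i:ℕ)+1)
    rw [mul_one]; exact key i g
end

section
/- Let (G,f) = der_{θ,b}(G,·) and (H,h) = der_{η,c}(H,*), with (H,*) abelian. If a ∈ H and φ : (G,·) → (H,*) is a group homomorphism with h(a,...,a) = a*φ(b) and φ∘θ = η∘φ, then ψ(x) = φ(x)*a is an n-ary homomorphism from (G,f) to (H,h): ψ(f(x₁,...,xₙ)) = h(ψ(x₁),...,ψ(xₙ)). -/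
theorem MonoidHom.map_mulAut_pow_apply {G H : Type*} [Monoid G] [Monoid H] (φ : G →* H)
    {θ : MulAut G} {η : MulAut H} (h : ∀ x, φ (θ x) = η (φ x)) (k : ℕ) (x : G) :
    φ ((θ ^ k) x) = (η ^ k) (φ x) := by
  induction k generalizing x with
  | zero => rfl
  | succ k ih => rw [pow_succ, MulAut.mul_apply, ih, h, pow_succ, MulAut.mul_apply]

section

variable {G H : Type*} [Group G] {n : ℕ}

theorem derOp_eq_derOp_one_mul (θ : MulAut G) (b : G) (x : Fin n → G) :
    derOp n θ b x = derOp n θ 1 x * b := by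
  rw [derOp, derOp, mul_one]

theorem MonoidHom.map_derOp [Group H] (φ : G →* H) {θ : MulAut G} {η : MulAut H}
    (h : ∀ x, φ (θ x) = η (φ x)) (b : G) (x : Fin n → G) :
    φ (derOp n θ b x) = derOp n η (φ b) (fun i => φ (x i)) := by
  simp only [derOp, map_mul, map_list_prod, List.map_ofFn, Function.comp_def,
    φ.map_mulAut_pow_apply h]

theorem derOp_mul [CommGroup H] (η : MulAut H) (c d : H) (y z : Fin n → H) :
    derOp n η (c * d) (fun i => y i * z i) = derOp n η c y * derOp n η d z := by
  simp only [derOp, List.prod_ofFn, map_mul, Finset.prod_mul_distrib]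
  exact mul_mul_mul_comm _ _ _ _

end

theorem hom_to_abelian_derived_general {G H : Type*} [Group G] [CommGroup H]
    (n : ℕ)
    (θ : MulAut G) (b : G)
    (η : MulAut H) (c : H)
    (a : H) (φ : G →* H)
    (ha : derOp n η c (fun _ : Fin n => a) = a * φ b)
    (hθη : ∀ x : G, φ (θ x) = η (φ x)) :
    ∀ x : Fin n → G,
      φ (derOp n θ b x) * a = derOp n η c (fun i => φ (x i) * a) := by
  intro x
  calc φ (derOp n θ b x) * a
      = derOp n η 1 (fun i => φ (x i)) * (a * φ b) := by
        rw [φ.map_derOp hθη, derOp_eq_derOp_one_mul _ (φ b), mul_comm a, mul_assoc]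
    _ = derOp n η (1 * c) (fun i => φ (x i) * a) := by rw [derOp_mul, ← ha]
    _ = derOp n η c (fun i => φ (x i) * a) := by rw [one_mul]

theorem hom_to_abelian_derived {G H : Type*} [Group G] [CommGroup H]
    (n : ℕ) (hn : 2 ≤ n)
    (θ : MulAut G) (b : G) (hb : θ b = b)
    (hconj : ∀ x : G, (θ ^ (n - 1)) x = b * x * b⁻¹)
    (η : MulAut H) (c : H) (hc : η c = c) (hη : η ^ (n - 1) = 1)
    (a : H) (φ : G →* H)
    (ha : derOp n η c (fun _ : Fin n => a) = a * φ b)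
    (hθη : ∀ x : G, φ (θ x) = η (φ x)) :
    ∀ x : Fin n → G,
      φ (derOp n θ b x) * a = derOp n η c (fun i => φ (x i) * a) :=
  hom_to_abelian_derived_general n θ b η c a φ ha hθη
end
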